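/- arXiv:1610.00565 — 4 statements merged into one kernel-verified Lean document; each statement's English description precedes it below -/
import Mathlib

section
/- Let $N$ be a nonzero submodule of a comultiplication $R$-module $M$. If $\mathrm{Ann}_R(N)$ is a 2-absorbing primary ideal of $R$, then $N$ is a strongly 2-absorbing secondary submodule of $M$. -/
open Pointwise

variable {R : Type*} [CommRing R] {M : Type*} [AddCommGroup M] [Module R M]

/-- A nonzero submodule `S` is second if every ring element acts on it
surjectively (`a • S = S`) or as zero (`a • S = ⊥`). -/
def IsSecond (S : Submodule R M) : Prop :=
  S ≠ ⊥ ∧ ∀ a : R, a • S = S ∨ a • S = ⊥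

/-- The second radical of `N`: the sum of all second submodules contained in `N`. -/
def secRad (N : Submodule R M) : Submodule R M :=
  sSup {S : Submodule R M | IsSecond S ∧ S ≤ N}

/-- A proper submodule `L` is completely irreducible if whenever `L` is an
intersection of a family of submodules, it equals one of them. -/
def CompletelyIrreducible (L : Submodule R M) : Prop :=
  L ≠ ⊤ ∧ ∀ s : Set (Submodule R M), L = sInf s → L ∈ s

/-- 2-absorbing secondary submodule. -/
def Is2AbsSecondary (N : Submodule R M) : Prop :=
  N ≠ ⊥ ∧ ∀ a b : R, ∀ L : Submodule R M, CompletelyIrreducible L →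
    (a * b) • N ≤ L →
    a • secRad N ≤ L ∨ b • secRad N ≤ L ∨ (a * b) • N = ⊥

/-- Strongly 2-absorbing secondary submodule. -/
def IsS2AbsSecondary (N : Submodule R M) : Prop :=
  N ≠ ⊥ ∧ ∀ a b : R, ∀ K : Submodule R M,
    (a * b) • N ≤ K →
    a • secRad N ≤ K ∨ b • secRad N ≤ K ∨ (a * b) • N = ⊥

/-- Strongly 2-absorbing second submodule. -/
def IsS2AbsSecond (N : Submodule R M) : Prop :=
  N ≠ ⊥ ∧ ∀ a b : R, ∀ K : Submodule R M,
    (a * b) • N ≤ K →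
    a • N ≤ K ∨ b • N ≤ K ∨ (a * b) • N = ⊥

/-- A 2-absorbing primary ideal. -/
def Is2AbsPrimaryIdeal (I : Ideal R) : Prop :=
  I ≠ ⊤ ∧ ∀ a b c : R, a * b * c ∈ I →
    a * b ∈ I ∨ a * c ∈ I.radical ∨ b * c ∈ I.radical

/-- A comultiplication module: every submodule equals `(0 :_M Ann(N))`. -/
def IsComultiplication (R M : Type*) [CommRing R] [AddCommGroup M] [Module R M] : Prop :=
  ∀ N : Submodule R M, ∀ m : M, m ∈ N ↔ ∀ r ∈ N.annihilator, r • m = 0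

/-- A secondary submodule: each `r : R` satisfies `r • N = N` or `r ^ t • N = ⊥`. -/
def IsSecondarySubmodule (N : Submodule R M) : Prop :=
  N ≠ ⊥ ∧ ∀ r : R, r • N = N ∨ ∃ t : ℕ, 0 < t ∧ r ^ t • N = ⊥

/-!
For `r ∈ Ann K` we have `a b r ∈ Ann N` while `a b ∉ Ann N`, so the 2-absorbing primary property
puts `a r` or `b r` into `√(Ann N) ⊆ Ann (sec N)`. Hence the ideal `Ann K` is covered by the two
ideals `(Ann (sec N) : a)` and `(Ann (sec N) : b)`, so it lies in one of them, and in a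
comultiplication module `a • Ann K ⊆ Ann (sec N)` means exactly `a • sec N ≤ K`.
-/

namespace Submodule

theorem pointwise_smul_le_iff {a : R} {S K : Submodule R M} :
    a • S ≤ K ↔ ∀ s ∈ S, a • s ∈ K := by
  rw [← SetLike.coe_subset_coe, coe_pointwise_smul, Set.smul_set_subset_iff]
  rfl

theorem pointwise_smul_eq_bot_iff {a : R} {S : Submodule R M} :
    a • S = ⊥ ↔ a ∈ S.annihilator := by
  simp only [← le_bot_iff, pointwise_smul_le_iff, mem_bot, mem_annihilator]

theorem pow_smul_eq_self {x : R} {S : Submodule R M} (h : x • S = S) (n : ℕ) :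
    x ^ n • S = S := by
  induction n with
  | zero => simp
  | succ k ih => rw [pow_succ, mul_smul, h, ih]

end Submodule

open Submodule

theorem IsSecond.radical_annihilator_le {S : Submodule R M} (hS : IsSecond S) :
    S.annihilator.radical ≤ S.annihilator := by
  rintro x ⟨n, hn⟩
  rw [← pointwise_smul_eq_bot_iff] at hn ⊢
  refine (hS.2 x).resolve_left fun hx => hS.1 ?_
  rw [← pow_smul_eq_self hx n, hn]

theorem radical_annihilator_le_annihilator_secRad (N : Submodule R M) :
    N.annihilator.radical ≤ (secRad N).annihilator := by
  rw [secRad, sSup_eq_iSup', annihilator_iSup]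
  exact le_iInf fun ⟨S, hS, hSN⟩ =>
    (Ideal.radical_mono (annihilator_mono hSN)).trans hS.radical_annihilator_le

theorem IsComultiplication.smul_le_iff (hM : IsComultiplication R M) {c : R}
    {L K : Submodule R M} : c • L ≤ K ↔ ∀ r ∈ K.annihilator, c * r ∈ L.annihilator := by
  simp only [pointwise_smul_le_iff, hM K, mem_annihilator (N := L), mul_smul, smul_comm c]
  exact forall₂_comm

theorem stmt6 (hM : IsComultiplication R M) (N : Submodule R M) (hN : N ≠ ⊥)
    (h : Is2AbsPrimaryIdeal (Submodule.annihilator N)) :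
    IsS2AbsSecondary N := by
  refine ⟨hN, fun a b K hK => ?_⟩
  by_cases hab : (a * b) • N = ⊥
  · exact .inr (.inr hab)
  set A := (secRad N).annihilator
  have mem_colon (c r : R) : r ∈ A.colon {c} ↔ c * r ∈ A := by
    rw [mem_colon_singleton, smul_eq_mul, mul_comm]
  have hrad := radical_annihilator_le_annihilator_secRad N
  have hcover : (K.annihilator : Set R) ⊆ A.colon {a} ∪ A.colon {b} := by
    intro r hr
    rw [Set.mem_union, SetLike.mem_coe, SetLike.mem_coe, mem_colon, mem_colon]
    rcases h.2 a b r (hM.smul_le_iff.1 hK r hr) with habr | har | hbr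
    · exact absurd (pointwise_smul_eq_bot_iff.2 habr) hab
    · exact .inl (hrad har)
    · exact .inr (hrad hbr)
  rcases Ideal.subset_union.1 hcover with ha | hb
  · exact .inl (hM.smul_le_iff.2 fun r hr => (mem_colon a r).1 (ha hr))
  · exact .inr (.inl (hM.smul_le_iff.2 fun r hr => (mem_colon b r).1 (hb hr)))
end

section
/- The $\mathbb{Z}$-module $M = \mathbb{Z}_p \oplus \mathbb{Z}_q \oplus \mathbb{Q}$, where $p \ne q$ are primes, satisfies: $\mathrm{Ann}_{\mathbb{Z}}(M) = 0$ is a 2-absorbing primary ideal of $\mathbb{Z}$, but $M$ is not a strongly 2-absorbing secondary module. -/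
open Pointwise

variable {R : Type*} [CommRing R] {M : Type*} [AddCommGroup M] [Module R M]

/-! The annihilator of `M` is zero because of the summand `ℚ`, and the zero ideal of `ℤ` is
prime. Strong 2-absorption fails for `a = p`, `b = q` and `K = 0 ⊕ 0 ⊕ ℚ`: the simple summands
`ℤ/p` and `ℤ/q` are second, hence lie in `sec(M)`, yet `q` does not kill `ℤ/p` and `p` does not
kill `ℤ/q`, while `pq` does not kill `ℚ`. -/

theorem Ideal.IsPrime.is2AbsPrimaryIdeal {I : Ideal R} (hI : I.IsPrime) :
    Is2AbsPrimaryIdeal I := by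
  refine ⟨hI.ne_top, fun a b c habc => ?_⟩
  rcases hI.mem_or_mem habc with hab | hc
  · exact Or.inl hab
  · exact Or.inr (Or.inl (I.le_radical (I.mul_mem_left a hc)))

theorem Submodule.smul_eq_bot_iff_mem_annihilator {N : Submodule R M} {a : R} :
    a • N = ⊥ ↔ a ∈ N.annihilator := by
  refine ⟨fun h => Submodule.mem_annihilator.2 fun n hn => ?_, fun h => eq_bot_iff.2 ?_⟩
  · exact (Submodule.mem_bot R).1 (h ▸ Submodule.smul_mem_pointwise_smul n a N hn)
  · rintro _ ⟨n, hn, rfl⟩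
    exact (Submodule.mem_bot R).2 (Submodule.mem_annihilator.1 h n hn)

theorem IsSecond.of_isAtom {S : Submodule R M} (hS : IsAtom S) : IsSecond S :=
  ⟨hS.1, fun a => (hS.le_iff.1 (Submodule.smul_le_self_of_tower a S)).symm⟩

theorem IsSecond.le_secRad {S N : Submodule R M} (hS : IsSecond S) (hSN : S ≤ N) :
    S ≤ secRad N :=
  le_sSup ⟨hS, hSN⟩

theorem isAtom_range_of_injective {R M N : Type*} [Ring R] [AddCommGroup M] [Module R M]
    [AddCommGroup N] [Module R N] [IsSimpleModule R N] {f : N →ₗ[R] M}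
    (hf : Function.Injective f) : IsAtom (LinearMap.range f) :=
  have := IsSimpleModule.congr (LinearEquiv.ofInjective f hf).symm
  IsSimpleModule.isAtom

theorem apply_mem_secRad_top_of_injective {N : Type*} [AddCommGroup N] [Module R N]
    [IsSimpleModule R N] {f : N →ₗ[R] M} (hf : Function.Injective f) (x : N) :
    f x ∈ secRad (⊤ : Submodule R M) :=
  (IsSecond.of_isAtom (isAtom_range_of_injective hf)).le_secRad le_top
    (LinearMap.mem_range_self f x)

theorem ZMod.isSimpleModule_int (p : ℕ) [Fact p.Prime] : IsSimpleModule ℤ (ZMod p) :=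
  (isSimpleModule_iff_isSimpleModule_of_algebraMap_surjective
    (ZMod.ringHom_surjective (algebraMap ℤ (ZMod p)))).2 inferInstance

theorem ZMod.natCast_ne_zero_of_prime_ne {p q : ℕ} (hp : p.Prime) (hq : q.Prime) (hpq : p ≠ q) :
    (p : ZMod q) ≠ 0 := by
  rw [Ne, ZMod.natCast_eq_zero_iff, Nat.prime_dvd_prime_iff_eq hq hp]
  exact hpq.symm

theorem stmt7 (p q : ℕ) (hp : p.Prime) (hq : q.Prime) (hpq : p ≠ q) :
    Submodule.annihilator (⊤ : Submodule ℤ (ZMod p × ZMod q × ℚ)) = ⊥ ∧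
    Is2AbsPrimaryIdeal
      (Submodule.annihilator (⊤ : Submodule ℤ (ZMod p × ZMod q × ℚ))) ∧
    ¬ IsS2AbsSecondary (⊤ : Submodule ℤ (ZMod p × ZMod q × ℚ)) := by
  have := Fact.mk hp
  have := Fact.mk hq
  have := ZMod.isSimpleModule_int p
  have := ZMod.isSimpleModule_int q
  have hann : Submodule.annihilator (⊤ : Submodule ℤ (ZMod p × ZMod q × ℚ)) = ⊥ := by
    rw [Submodule.annihilator_top, Module.annihilator_eq_bot]
    infer_instance
  refine ⟨hann, hann ▸ Ideal.isPrime_bot.is2AbsPrimaryIdeal, ?_⟩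
  rintro ⟨-, h⟩
  let K : Submodule ℤ (ZMod p × ZMod q × ℚ) :=
    (⊥ : Submodule ℤ (ZMod p)).prod ((⊥ : Submodule ℤ (ZMod q)).prod ⊤)
  have hpqK : ((p : ℤ) * q) • (⊤ : Submodule ℤ (ZMod p × ZMod q × ℚ)) ≤ K := by
    rintro _ ⟨y, -, rfl⟩
    simp [K, Submodule.mem_prod, mul_smul]
  rcases h p q K hpqK with hpK | hqK | hpq0
  · have hx := apply_mem_secRad_top_of_injective
      (f := LinearMap.inr ℤ (ZMod p) _ ∘ₗ LinearMap.inl ℤ (ZMod q) ℚ)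
      (LinearMap.inr_injective.comp LinearMap.inl_injective) 1
    have hpx := hpK (Submodule.smul_mem_pointwise_smul _ (p : ℤ) _ hx)
    simp [K, Submodule.mem_prod, ZMod.natCast_ne_zero_of_prime_ne hp hq hpq] at hpx
  · have hx := apply_mem_secRad_top_of_injective
      (f := LinearMap.inl ℤ (ZMod p) (ZMod q × ℚ)) LinearMap.inl_injective 1
    have hqx := hqK (Submodule.smul_mem_pointwise_smul _ (q : ℤ) _ hx)
    simp [K, Submodule.mem_prod, ZMod.natCast_ne_zero_of_prime_ne hq hp hpq.symm] at hqx
  · rw [Submodule.smul_eq_bot_iff_mem_annihilator, hann, Ideal.mem_bot] at hpq0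
    simp [hp.ne_zero, hq.ne_zero] at hpq0
end

section
/- Let $f : M \to M'$ be an injective homomorphism of $R$-modules and $N'$ a submodule of $M'$ with $N' \subseteq f(M)$. Then $\mathrm{sec}(f^{-1}(N')) = f^{-1}(\mathrm{sec}(N'))$. -/
open Pointwise

variable {R : Type*} [CommRing R] {M : Type*} [AddCommGroup M] [Module R M]

/-! Along an injective `f`, `Submodule.map f` is an order embedding commuting with the
scalar actions, so it preserves and reflects second submodules; below `N' ≤ range f` it is a
bijection onto the submodules of `N'`, hence carries `sec (f⁻¹ N')` onto `sec N'`. -/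

section

variable {M' : Type*} [AddCommGroup M'] [Module R M']

theorem isSecond_map_iff {f : M →ₗ[R] M'} (hf : Function.Injective f) {S : Submodule R M} :
    IsSecond (S.map f) ↔ IsSecond S := by
  have hinj := Submodule.map_injective_of_injective hf
  simp only [IsSecond, ← Submodule.map_pointwise_smul, ← Submodule.map_bot f, hinj.ne_iff,
    hinj.eq_iff]

theorem secRad_map {f : M →ₗ[R] M'} (hf : Function.Injective f) (N : Submodule R M) :
    (secRad N).map f = secRad (N.map f) := by
  have hseconds : Submodule.map f '' {S | IsSecond S ∧ S ≤ N} =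
      {S' | IsSecond S' ∧ S' ≤ N.map f} := by
    ext S'
    constructor
    · rintro ⟨S, ⟨hS, hSN⟩, rfl⟩
      exact ⟨(isSecond_map_iff hf).2 hS, Submodule.map_mono hSN⟩
    · rintro ⟨hS', hS'N⟩
      have hS'f : (S'.comap f).map f = S' :=
        Submodule.map_comap_eq_self (hS'N.trans (LinearMap.map_le_range (f := f)))
      refine ⟨S'.comap f, ⟨?_, ?_⟩, hS'f⟩
      · rwa [← isSecond_map_iff hf, hS'f]
      · simpa only [Submodule.comap_map_eq_of_injective hf] using
          Submodule.comap_mono (f := f) hS'N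
  rw [secRad, secRad, ← hseconds, sSup_image, (Submodule.gc_map_comap f).l_sSup]

end

theorem stmt14 {M' : Type*} [AddCommGroup M'] [Module R M']
    (f : M →ₗ[R] M') (hf : Function.Injective f) (N' : Submodule R M')
    (hN' : N' ≤ LinearMap.range f) :
    secRad (N'.comap f) = (secRad N').comap f := by
  rw [← Submodule.comap_map_eq_of_injective hf (secRad (N'.comap f)), secRad_map hf,
    Submodule.map_comap_eq_self hN']
end

section
/- Let $M$ be an $R$-module and $N \subseteq K$ submodules of $M$. Then $N$ is a strongly 2-absorbing secondary submodule of $K$ (viewed as a module) if and only if $N$ is a strongly 2-absorbing secondary submodule of $M$. -/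
open Pointwise

variable {R : Type*} [CommRing R] {M : Type*} [AddCommGroup M] [Module R M]

namespace Submodule

variable {M₂ : Type*} [AddCommGroup M₂] [Module R M₂] {f : M →ₗ[R] M₂}

theorem map_eq_bot_iff_of_injective (hf : Function.Injective f) {S : Submodule R M} :
    S.map f = ⊥ ↔ S = ⊥ :=
  (map_injective_of_injective hf).eq_iff' (map_bot f)

theorem isSecond_map_iff (hf : Function.Injective f) {S : Submodule R M} :
    IsSecond (S.map f) ↔ IsSecond S := by
  simp only [IsSecond, ne_eq, ← map_pointwise_smul, map_eq_bot_iff_of_injective hf,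
    (map_injective_of_injective hf).eq_iff]

theorem secRad_map (hf : Function.Injective f) (N : Submodule R M) :
    secRad (N.map f) = (secRad N).map f := by
  apply le_antisymm
  · refine sSup_le fun T ⟨hT, hTN⟩ => ?_
    have hT_eq : (T.comap f).map f = T :=
      map_comap_eq_of_le (hTN.trans LinearMap.map_le_range)
    rw [← hT_eq] at hT hTN ⊢
    rw [map_le_map_iff_of_injective hf] at hTN
    exact map_mono (le_sSup ⟨(isSecond_map_iff hf).1 hT, hTN⟩)
  · rw [map_le_iff_le_comap]
    refine sSup_le fun S ⟨hS, hSN⟩ => ?_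
    rw [← map_le_iff_le_comap]
    exact le_sSup ⟨(isSecond_map_iff hf).2 hS, map_mono hSN⟩

theorem isS2AbsSecondary_map_iff (hf : Function.Injective f) {N : Submodule R M} :
    IsS2AbsSecondary (N.map f) ↔ IsS2AbsSecondary N := by
  have hle (r : R) (X : Submodule R M) (H : Submodule R M₂) :
      r • X.map f ≤ H ↔ r • X ≤ H.comap f := by
    rw [← map_pointwise_smul, map_le_iff_le_comap]
  have hbot (r : R) : r • N.map f = ⊥ ↔ r • N = ⊥ := by
    rw [← map_pointwise_smul, map_eq_bot_iff_of_injective hf]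
  simp only [IsS2AbsSecondary, ne_eq, map_eq_bot_iff_of_injective hf, secRad_map hf, hle, hbot]
  refine and_congr_right fun _ => ⟨fun h a b H => ?_, fun h a b H => h a b (H.comap f)⟩
  -- every test submodule `H` of `M` is recovered as `(H.map f).comap f`
  simpa only [comap_map_eq_of_injective hf] using h a b (H.map f)

end Submodule

theorem stmt16 (N K : Submodule R M) (hNK : N ≤ K) :
    IsS2AbsSecondary (N.comap K.subtype) ↔ IsS2AbsSecondary N := by
  have hN : (N.comap K.subtype).map K.subtype = N := by
    rw [Submodule.map_comap_subtype, inf_eq_right.2 hNK]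
  conv_rhs => rw [← hN]
  exact (Submodule.isS2AbsSecondary_map_iff K.injective_subtype).symm
end
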